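/- Let D be a pure double Boolean algebra. Then the map h defined by h(x) := (F_{¬x}, I_x) is a dBa isomorphism from D onto the dBa of clopen object oriented semiconcepts of K^T_pr(D). In particular (since every Boolean algebra with ⌟ := ¬ is a pure dBa), every Boolean algebra B is isomorphic to the algebra of clopen object oriented semiconcepts of K^T_pr(B). -/

import Mathlib

universe u v

/-- A double Boolean algebra (dBa). -/
structure DBA (D : Type u) where
  sup : D → D → D
  inf : D → D → D
  neg : D → D
  dneg : D → D
  top : D
  bot : D
  ax1a : ∀ x y, inf (inf x x) y = inf x y
  ax2a : ∀ x y, inf x y = inf y x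
  ax3a : ∀ x y z, inf x (inf y z) = inf (inf x y) z
  ax4a : ∀ x, neg (inf x x) = neg x
  ax5a : ∀ x y, inf x (sup x y) = inf x x
  ax6a : ∀ x y z, inf x (neg (inf (neg y) (neg z))) =
      neg (inf (neg (inf x y)) (neg (inf x z)))
  ax7a : ∀ x y, inf x (neg (inf (neg x) (neg y))) = inf x x
  ax8a : ∀ x y, neg (neg (inf x y)) = inf x y
  ax9a : ∀ x, inf x (neg x) = bot
  ax10a : neg bot = inf top top
  ax11a : neg top = bot
  ax1b : ∀ x y, sup (sup x x) y = sup x y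
  ax2b : ∀ x y, sup x y = sup y x
  ax3b : ∀ x y z, sup x (sup y z) = sup (sup x y) z
  ax4b : ∀ x, dneg (sup x x) = dneg x
  ax5b : ∀ x y, sup x (inf x y) = sup x x
  ax6b : ∀ x y z, sup x (dneg (sup (dneg y) (dneg z))) =
      dneg (sup (dneg (sup x y)) (dneg (sup x z)))
  ax7b : ∀ x y, sup x (dneg (sup (dneg x) (dneg y))) = sup x x
  ax8b : ∀ x y, dneg (dneg (sup x y)) = sup x y
  ax9b : ∀ x, sup x (dneg x) = top
  ax10b : dneg top = sup bot bot
  ax11b : dneg bot = top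
  ax12 : ∀ x, sup (inf x x) (inf x x) = inf (sup x x) (sup x x)

namespace DBA

variable {D : Type u} {E : Type v}

/-- x ∨ y := ¬(¬x ⊓ ¬y) -/
def vee (A : DBA D) (x y : D) : D := A.neg (A.inf (A.neg x) (A.neg y))

/-- x ∧ y := ⌟(⌟x ⊔ ⌟y) -/
def wedge (A : DBA D) (x y : D) : D := A.dneg (A.sup (A.dneg x) (A.dneg y))

/-- The quasi-order ⊑. -/
def le (A : DBA D) (x y : D) : Prop := A.inf x y = A.inf x x ∧ A.sup x y = A.sup y y

def IsFilter (A : DBA D) (F : Set D) : Prop :=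
  (∀ x ∈ F, ∀ y ∈ F, A.inf x y ∈ F) ∧ ∀ x ∈ F, ∀ z, A.le x z → z ∈ F

def IsIdeal (A : DBA D) (I : Set D) : Prop :=
  (∀ x ∈ I, ∀ y ∈ I, A.sup x y ∈ I) ∧ ∀ x ∈ I, ∀ z, A.le z x → z ∈ I

def IsPrimaryFilter (A : DBA D) (F : Set D) : Prop :=
  A.IsFilter F ∧ F ≠ Set.univ ∧ ∀ x, x ∈ F ∨ A.neg x ∈ F

def IsPrimaryIdeal (A : DBA D) (I : Set D) : Prop :=
  A.IsIdeal I ∧ I ≠ Set.univ ∧ ∀ x, x ∈ I ∨ A.dneg x ∈ I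

def Pure (A : DBA D) : Prop := ∀ x, A.inf x x = x ∨ A.sup x x = x

def Contextual (A : DBA D) : Prop := ∀ x y, A.le x y → A.le y x → x = y

def FullyContextual (A : DBA D) : Prop :=
  A.Contextual ∧
    ∀ y x, A.inf y y = y → A.sup x x = x → A.sup y y = A.inf x x →
      ∃! z, A.inf z z = y ∧ A.sup z z = x

/-- D_p = D_⊓ ∪ D_⊔ -/
def Dp (A : DBA D) : Set D := {x | A.inf x x = x} ∪ {x | A.sup x x = x}

def IsHom (A : DBA D) (B : DBA E) (h : D → E) : Prop :=
  (∀ x y, h (A.inf x y) = B.inf (h x) (h y)) ∧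
  (∀ x y, h (A.sup x y) = B.sup (h x) (h y)) ∧
  (∀ x, h (A.neg x) = B.neg (h x)) ∧
  (∀ x, h (A.dneg x) = B.dneg (h x)) ∧
  h A.top = B.top ∧ h A.bot = B.bot

def IsHomOn (A : DBA D) (B : DBA E) (S : Set D) (h : D → E) : Prop :=
  (∀ x ∈ S, ∀ y ∈ S, h (A.inf x y) = B.inf (h x) (h y)) ∧
  (∀ x ∈ S, ∀ y ∈ S, h (A.sup x y) = B.sup (h x) (h y)) ∧
  (∀ x ∈ S, h (A.neg x) = B.neg (h x)) ∧
  (∀ x ∈ S, h (A.dneg x) = B.dneg (h x)) ∧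
  h A.top = B.top ∧ h A.bot = B.bot

end DBA

section FCA

variable {G : Type u} {M : Type v}

/-- B^◇ -/
def odia (R : G → M → Prop) (B : Set M) : Set G := {g | ∃ m ∈ B, R g m}
/-- B^□ -/
def obox (R : G → M → Prop) (B : Set M) : Set G := {g | ∀ m, R g m → m ∈ B}
/-- A^◆ -/
def obdia (R : G → M → Prop) (A : Set G) : Set M := {m | ∃ g ∈ A, R g m}
/-- A^■ -/
def obbox (R : G → M → Prop) (A : Set G) : Set M := {m | ∀ g, R g m → g ∈ A}

def pinf (R : G → M → Prop) (p q : Set G × Set M) : Set G × Set M :=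
  (p.1 ∪ q.1, obbox R (p.1 ∪ q.1))
def psup (R : G → M → Prop) (p q : Set G × Set M) : Set G × Set M :=
  (odia R (p.2 ∩ q.2), p.2 ∩ q.2)
def pneg (R : G → M → Prop) (p : Set G × Set M) : Set G × Set M :=
  (p.1ᶜ, obbox R p.1ᶜ)
def pdneg (R : G → M → Prop) (p : Set G × Set M) : Set G × Set M :=
  (odia R p.2ᶜ, p.2ᶜ)
def ptop : Set G × Set M := (∅, ∅)
def pbot : Set G × Set M := (Set.univ, Set.univ)
/-- quasi-order on pairs: (A,B) ⊑ (C,D) iff C ⊆ A and D ⊆ B -/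
def ple (p q : Set G × Set M) : Prop := q.1 ⊆ p.1 ∧ q.2 ⊆ p.2

/-- object oriented protoconcept -/
def IsProto (R : G → M → Prop) (p : Set G × Set M) : Prop :=
  odia R (obbox R p.1) = odia R p.2
/-- object oriented semiconcept -/
def IsSemi (R : G → M → Prop) (p : Set G × Set M) : Prop :=
  obbox R p.1 = p.2 ∨ odia R p.2 = p.1

/-- continuity of the relation R -/
def ContRel [TopologicalSpace G] [TopologicalSpace M] (R : G → M → Prop) : Prop :=
  ∀ O : Set M, IsOpen O → IsOpen (odia R O) ∧ IsOpen (obox R O)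
/-- continuity of the converse relation R⁻¹ -/
def ContRelInv [TopologicalSpace G] [TopologicalSpace M] (R : G → M → Prop) : Prop :=
  ∀ O : Set G, IsOpen O → IsOpen (obdia R O) ∧ IsOpen (obbox R O)

def IsClopenProto [TopologicalSpace G] [TopologicalSpace M] (R : G → M → Prop)
    (p : Set G × Set M) : Prop :=
  IsProto R p ∧ IsClopen p.1 ∧ IsClopen p.2

def IsClopenSemi [TopologicalSpace G] [TopologicalSpace M] (R : G → M → Prop)
    (p : Set G × Set M) : Prop :=
  IsSemi R p ∧ IsClopen p.1 ∧ IsClopen p.2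

def pmap {G' : Type*} {M' : Type*} (α : G → G') (β : M → M') (p : Set G' × Set M') :
    Set G × Set M := (α ⁻¹' p.1, β ⁻¹' p.2)

end FCA

section StoneDBA

variable {D : Type u}

/-- the set of primary filters of a dBa, as a type -/
def PrimF (A : DBA D) : Type u := {F : Set D // A.IsPrimaryFilter F}
/-- the set of primary ideals of a dBa, as a type -/
def PrimI (A : DBA D) : Type u := {I : Set D // A.IsPrimaryIdeal I}
/-- F ∇ I iff F ∩ I = ∅ -/
def nabla (A : DBA D) : PrimF A → PrimI A → Prop := fun F I => F.val ∩ I.val = ∅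
/-- F_x -/
def Fset (A : DBA D) (x : D) : Set (PrimF A) := {F | x ∈ F.val}
/-- I_x -/
def Iset (A : DBA D) (x : D) : Set (PrimI A) := {I | x ∈ I.val}

/-- the topology T on primary filters, with the F_x as a subbase of closed sets -/
def filtTop (A : DBA D) : TopologicalSpace (PrimF A) :=
  TopologicalSpace.generateFrom {U | ∃ x : D, U = (Fset A x)ᶜ}
/-- the topology J on primary ideals, with the I_x as a subbase of closed sets -/
def idlTop (A : DBA D) : TopologicalSpace (PrimI A) :=
  TopologicalSpace.generateFrom {U | ∃ x : D, U = (Iset A x)ᶜ}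

/-- the map h(x) := (F_{¬x}, I_x) -/
def protoEmb (A : DBA D) (x : D) : Set (PrimF A) × Set (PrimI A) :=
  (Fset A (A.neg x), Iset A x)

end StoneDBA

section SemiPrim

variable {G : Type u} {M : Type v} [TopologicalSpace G] [TopologicalSpace M]

/-- a primary filter of the dBa of clopen object oriented semiconcepts -/
def IsSemiPrimFilter (R : G → M → Prop) (F : Set (Set G × Set M)) : Prop :=
  (∀ p ∈ F, IsClopenSemi R p) ∧
  (∀ p ∈ F, ∀ q ∈ F, pinf R p q ∈ F) ∧
  (∀ p ∈ F, ∀ z, IsClopenSemi R z → ple p z → z ∈ F) ∧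
  F ≠ {p | IsClopenSemi R p} ∧
  (∀ p, IsClopenSemi R p → (p ∈ F ∨ pneg R p ∈ F))

/-- a primary ideal of the dBa of clopen object oriented semiconcepts -/
def IsSemiPrimIdeal (R : G → M → Prop) (I : Set (Set G × Set M)) : Prop :=
  (∀ p ∈ I, IsClopenSemi R p) ∧
  (∀ p ∈ I, ∀ q ∈ I, psup R p q ∈ I) ∧
  (∀ p ∈ I, ∀ z, IsClopenSemi R z → ple z p → z ∈ I) ∧
  I ≠ {p | IsClopenSemi R p} ∧
  (∀ p, IsClopenSemi R p → (p ∈ I ∨ pdneg R p ∈ I))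

def SemiPF (R : G → M → Prop) := {F : Set (Set G × Set M) // IsSemiPrimFilter R F}
def SemiPI (R : G → M → Prop) := {I : Set (Set G × Set M) // IsSemiPrimIdeal R I}

def semiPFTop (R : G → M → Prop) : TopologicalSpace (SemiPF R) :=
  TopologicalSpace.generateFrom
    {U | ∃ p, IsClopenSemi R p ∧ U = {F : SemiPF R | p ∈ F.val}ᶜ}
def semiPITop (R : G → M → Prop) : TopologicalSpace (SemiPI R) :=
  TopologicalSpace.generateFrom
    {U | ∃ p, IsClopenSemi R p ∧ U = {I : SemiPI R | p ∈ I.val}ᶜ}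

end SemiPrim

/-- the statement that h(x) := (F_{¬x}, I_x) is a dBa isomorphism from D onto the dBa of
clopen object oriented semiconcepts of K^T_pr(D) -/
def semiRep {D : Type u} (A : DBA D) : Prop :=
  (∀ x y : D, protoEmb A (A.inf x y) = pinf (nabla A) (protoEmb A x) (protoEmb A y)) ∧
  (∀ x y : D, protoEmb A (A.sup x y) = psup (nabla A) (protoEmb A x) (protoEmb A y)) ∧
  (∀ x : D, protoEmb A (A.neg x) = pneg (nabla A) (protoEmb A x)) ∧
  (∀ x : D, protoEmb A (A.dneg x) = pdneg (nabla A) (protoEmb A x)) ∧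
  protoEmb A A.top = ptop ∧
  protoEmb A A.bot = pbot ∧
  Set.BijOn (protoEmb A) Set.univ
    {p | @IsClopenSemi (PrimF A) (PrimI A) (filtTop A) (idlTop A) (nabla A) p}

/-!
Primary filters separate the elements of `D_⊓ = {x | x ⊓ x = x}`, and primary ideals those of
`D_⊔`: this is a prime filter theorem proved with Zorn's lemma, and ideals are treated as the
filters of the dual dBa. Hence `x ↦ F_x` turns `⊓, ¬` into `∩, ᶜ` and `x ↦ I_x` turns `⊔, ⌟` into
`∩, ᶜ`, while the separation gives `(F_{¬u})^■ = I_u` for `u ∈ D_⊓` and `(I_v)^◇ = F_{¬v}` for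
`v ∈ D_⊔`. Together these are the homomorphism laws, and in a pure dBa every `h x` is a
semiconcept. An element of a pure dBa is determined by `x ⊓ x` and `x ⊔ x`, which gives
injectivity. Both spaces are compact, and the `F_x` (resp. `I_x`) form a basis of clopen sets
closed under finite unions, so every clopen set is some `F_x` (resp. `I_x`): this gives
surjectivity.
-/

namespace DBA

section Dual

variable {D : Type u}

def dual (A : DBA D) : DBA D where
  sup := A.inf
  inf := A.sup
  neg := A.dneg
  dneg := A.neg
  top := A.bot
  bot := A.top
  ax1a := A.ax1b
  ax2a := A.ax2b
  ax3a := A.ax3b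
  ax4a := A.ax4b
  ax5a := A.ax5b
  ax6a := A.ax6b
  ax7a := A.ax7b
  ax8a := A.ax8b
  ax9a := A.ax9b
  ax10a := A.ax10b
  ax11a := A.ax11b
  ax1b := A.ax1a
  ax2b := A.ax2a
  ax3b := A.ax3a
  ax4b := A.ax4a
  ax5b := A.ax5a
  ax6b := A.ax6a
  ax7b := A.ax7a
  ax8b := A.ax8a
  ax9b := A.ax9a
  ax10b := A.ax10a
  ax11b := A.ax11a
  ax12 x := (A.ax12 x).symm

variable {A : DBA D}

theorem dual_le {x y : D} : A.dual.le x y ↔ A.le y x := by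
  change A.sup x y = A.sup x x ∧ A.inf x y = A.inf y y ↔ _
  rw [A.ax2a x y, A.ax2b x y, and_comm]
  rfl

theorem isFilter_dual {S : Set D} : A.dual.IsFilter S ↔ A.IsIdeal S := by
  simp only [IsFilter, IsIdeal, dual_le]
  rfl

theorem isPrimaryFilter_dual {S : Set D} : A.dual.IsPrimaryFilter S ↔ A.IsPrimaryIdeal S := by
  simp only [IsPrimaryFilter, IsPrimaryIdeal, isFilter_dual]
  rfl

theorem isPrimaryIdeal_dual {S : Set D} : A.dual.IsPrimaryIdeal S ↔ A.IsPrimaryFilter S :=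
  (isPrimaryFilter_dual (A := A.dual)).symm

end Dual

section Algebra

variable {D : Type u} {A : DBA D} {x y z m : D}

local infixl:70 " ⊓' " => A.inf

local instance : Std.Associative A.inf := ⟨fun a b c => (A.ax3a a b c).symm⟩
local instance : Std.Commutative A.inf := ⟨A.ax2a⟩

theorem inf_idem_inf (x y : D) : x ⊓' y ⊓' (x ⊓' y) = x ⊓' y :=
  calc x ⊓' y ⊓' (x ⊓' y) = x ⊓' x ⊓' (y ⊓' y) := by ac_rfl
    _ = y ⊓' y ⊓' x := by rw [A.ax1a, A.ax2a]
    _ = x ⊓' y := by rw [A.ax1a, A.ax2a]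

theorem inf_top (x : D) : x ⊓' A.top = x ⊓' x := by
  rw [← A.ax9b x]
  exact A.ax5a _ _

theorem inf_top_top (hm : m ⊓' m = m) : m ⊓' (A.top ⊓' A.top) = m := by
  rw [A.ax3a, inf_top m, hm, inf_top, hm]

theorem bot_inf (x : D) : A.bot ⊓' x = A.bot := by
  rw [← A.ax9a x]
  calc x ⊓' A.neg x ⊓' x = x ⊓' x ⊓' A.neg x := by ac_rfl
    _ = x ⊓' A.neg x := A.ax1a _ _

theorem neg_neg (x : D) : A.neg (A.neg x) = x ⊓' x := by
  rw [← A.ax4a x]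
  exact A.ax8a x x

theorem inf_idem_neg (x : D) : A.neg x ⊓' A.neg x = A.neg x := by
  rw [← neg_neg, neg_neg x, A.ax4a]

theorem sup_idem_sup (x y : D) : A.sup (A.sup x y) (A.sup x y) = A.sup x y :=
  inf_idem_inf (A := A.dual) x y

theorem sup_idem_dneg (x : D) : A.sup (A.dneg x) (A.dneg x) = A.dneg x :=
  inf_idem_neg (A := A.dual) x

protected theorem le_refl (x : D) : A.le x x := ⟨rfl, rfl⟩

theorem inf_eq_inf_self_trans (h₁ : x ⊓' y = x ⊓' x) (h₂ : y ⊓' z = y ⊓' y) :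
    x ⊓' z = x ⊓' x :=
  calc x ⊓' z = x ⊓' y ⊓' z := by rw [h₁, A.ax1a]
    _ = x ⊓' y ⊓' y := by rw [← A.ax3a, h₂, A.ax3a]
    _ = x ⊓' x := by rw [h₁, A.ax1a, h₁]

protected theorem le_trans (h₁ : A.le x y) (h₂ : A.le y z) : A.le x z :=
  ⟨inf_eq_inf_self_trans h₁.1 h₂.1,
    (A.ax2b x z).trans <| inf_eq_inf_self_trans (A := A.dual)
      ((A.ax2b z y).trans h₂.2) ((A.ax2b y x).trans h₁.2)⟩

theorem le_of_inf_eq (hm : m ⊓' m = m) (h : m ⊓' z = m) : A.le m z := by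
  refine ⟨by rw [h, hm], ?_⟩
  have := A.ax5b z m
  rw [A.ax2a z m, h] at this
  rw [A.ax2b, this]

theorem inf_le_left (x y : D) : A.le (x ⊓' y) x :=
  le_of_inf_eq (inf_idem_inf x y) <|
    calc x ⊓' y ⊓' x = x ⊓' x ⊓' y := by ac_rfl
      _ = x ⊓' y := A.ax1a _ _

theorem inf_le_right (x y : D) : A.le (x ⊓' y) y := by
  rw [A.ax2a]
  exact inf_le_left y x

theorem inf_inf_le_inf_left (x y z : D) : A.le (x ⊓' y ⊓' z) (x ⊓' z) := by
  rw [show x ⊓' y ⊓' z = x ⊓' z ⊓' y by ac_rfl]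
  exact inf_le_left _ _

theorem inf_inf_le_inf_right (x y z : D) : A.le (x ⊓' y ⊓' z) (y ⊓' z) := by
  rw [A.ax2a x y]
  exact inf_inf_le_inf_left y x z

theorem le_inf (hm : m ⊓' m = m) (h₁ : A.le m x) (h₂ : A.le m y) : A.le m (x ⊓' y) :=
  le_of_inf_eq hm (by rw [A.ax3a, h₁.1, hm, h₂.1, hm])

theorem bot_le (x : D) : A.le A.bot x := by
  refine ⟨by rw [bot_inf, bot_inf], ?_⟩
  rw [← A.ax9a x, A.ax2b]
  exact A.ax5b _ _

theorem le_top (x : D) : A.le x A.top :=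
  dual_le.1 (bot_le (A := A.dual) x)

theorem le_sup_left (x y : D) : A.le x (A.sup x y) :=
  dual_le.1 (inf_le_left (A := A.dual) x y)

theorem le_sup_right (x y : D) : A.le y (A.sup x y) :=
  dual_le.1 (inf_le_right (A := A.dual) x y)

theorem vee_le (h₁ : A.le x z) (h₂ : A.le y z) : A.le (A.vee x y) z :=
  le_of_inf_eq (inf_idem_neg _) <|
    calc A.vee x y ⊓' z = z ⊓' A.vee x y := A.ax2a _ _
      _ = A.vee (z ⊓' x) (z ⊓' y) := A.ax6a _ _ _
      _ = A.vee (x ⊓' x) (y ⊓' y) := by rw [A.ax2a z x, h₁.1, A.ax2a z y, h₂.1]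
      _ = A.vee x y := by rw [vee, A.ax4a, A.ax4a, vee]

theorem vee_le_sup (x y : D) : A.le (A.vee x y) (A.sup x y) :=
  vee_le (le_sup_left x y) (le_sup_right x y)

theorem eq_vee_inf_inf_neg (hm : m ⊓' m = m) (y : D) : m = A.vee (m ⊓' y) (m ⊓' A.neg y) := by
  rw [vee, ← A.ax6a, A.ax9a, A.ax10a, inf_top_top hm]

end Algebra

end DBA
namespace DBA

section Filters

variable {D : Type u} {A : DBA D} {F I : Set D} {x y : D}

local infixl:70 " ⊓' " => A.inf

theorem IsFilter.top_mem (hF : A.IsFilter F) (hne : F.Nonempty) : A.top ∈ F :=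
  let ⟨x, hx⟩ := hne
  hF.2 x hx _ (le_top x)

theorem IsPrimaryFilter.top_mem (hF : A.IsPrimaryFilter F) : A.top ∈ F :=
  hF.1.top_mem ((hF.2.2 A.top).elim (⟨_, ·⟩) (⟨_, ·⟩))

theorem IsPrimaryFilter.bot_notMem (hF : A.IsPrimaryFilter F) : A.bot ∉ F := fun h =>
  hF.2.1 (Set.eq_univ_of_forall fun z => hF.1.2 _ h z (bot_le z))

theorem IsPrimaryFilter.inf_mem_iff (hF : A.IsPrimaryFilter F) : x ⊓' y ∈ F ↔ x ∈ F ∧ y ∈ F :=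
  ⟨fun h => ⟨hF.1.2 _ h _ (inf_le_left x y), hF.1.2 _ h _ (inf_le_right x y)⟩,
    fun h => hF.1.1 _ h.1 _ h.2⟩

theorem IsPrimaryFilter.neg_mem_iff (hF : A.IsPrimaryFilter F) : A.neg x ∈ F ↔ x ∉ F :=
  ⟨fun h hx => hF.bot_notMem (A.ax9a x ▸ hF.1.1 _ hx _ h), (hF.2.2 x).resolve_left⟩

theorem IsPrimaryIdeal.bot_mem (hI : A.IsPrimaryIdeal I) : A.bot ∈ I :=
  (isPrimaryFilter_dual.2 hI).top_mem

theorem IsPrimaryIdeal.top_notMem (hI : A.IsPrimaryIdeal I) : A.top ∉ I :=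
  (isPrimaryFilter_dual.2 hI).bot_notMem

theorem IsPrimaryIdeal.sup_mem_iff (hI : A.IsPrimaryIdeal I) : A.sup x y ∈ I ↔ x ∈ I ∧ y ∈ I :=
  (isPrimaryFilter_dual.2 hI).inf_mem_iff

theorem IsPrimaryIdeal.dneg_mem_iff (hI : A.IsPrimaryIdeal I) : A.dneg x ∈ I ↔ x ∉ I :=
  (isPrimaryFilter_dual.2 hI).neg_mem_iff

theorem isFilter_sUnion {c : Set (Set D)} (hc : ∀ F ∈ c, A.IsFilter F)
    (hchain : IsChain (· ⊆ ·) c) : A.IsFilter (⋃₀ c) := by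
  refine ⟨?_, fun x ⟨F, hF, hx⟩ z hxz => ⟨F, hF, (hc F hF).2 _ hx _ hxz⟩⟩
  rintro x ⟨F₁, h₁, hx⟩ y ⟨F₂, h₂, hy⟩
  rcases hchain.total h₁ h₂ with h | h
  · exact ⟨F₂, h₂, (hc F₂ h₂).1 _ (h hx) _ hy⟩
  · exact ⟨F₁, h₁, (hc F₁ h₁).1 _ hx _ (h hy)⟩

theorem isFilter_setOf_le {u : D} (hu : u ⊓' u = u) : A.IsFilter {z | A.le u z} :=
  ⟨fun _ hz _ hz' => le_inf hu hz hz', fun _ hz _ hzz' => DBA.le_trans hz hzz'⟩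

theorem isFilter_setOf_inf_le {M : Set D} (hM : A.IsFilter M) (y : D) :
    A.IsFilter {z | ∃ c ∈ M, A.le (c ⊓' y) z} := by
  refine ⟨?_, fun z ⟨c, hc, hcz⟩ z' hzz' => ⟨c, hc, DBA.le_trans hcz hzz'⟩⟩
  rintro z ⟨c, hc, hcz⟩ z' ⟨c', hc', hcz'⟩
  exact ⟨c ⊓' c', hM.1 _ hc _ hc', le_inf (inf_idem_inf _ _)
    (DBA.le_trans (inf_inf_le_inf_left c c' y) hcz)
    (DBA.le_trans (inf_inf_le_inf_right c c' y) hcz')⟩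

theorem exists_isPrimaryFilter_disjoint {G B : Set D} (hG : A.IsFilter G) (hGne : G.Nonempty)
    (hBne : B.Nonempty) (hBdown : ∀ w ∈ B, ∀ z, A.le z w → z ∈ B)
    (hBvee : ∀ a ∈ B, ∀ b ∈ B, A.vee a b ∈ B) (hGB : Disjoint G B) :
    ∃ M, G ⊆ M ∧ A.IsPrimaryFilter M ∧ Disjoint M B := by
  obtain ⟨M, hGM, hmax⟩ := zorn_subset_nonempty {F | A.IsFilter F ∧ G ⊆ F ∧ Disjoint F B}
    (fun c hc hchain ⟨F₀, hF₀⟩ => ⟨⋃₀ c,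
      ⟨isFilter_sUnion (fun F hF => (hc hF).1) hchain,
        (hc hF₀).2.1.trans (Set.subset_sUnion_of_mem hF₀),
        Set.disjoint_sUnion_left.2 fun F hF => (hc hF).2.2⟩,
      fun _ => Set.subset_sUnion_of_mem⟩) G ⟨hG, subset_rfl, hGB⟩
  obtain ⟨hM, -, hMB⟩ := hmax.prop
  obtain ⟨g, hg⟩ := hGne
  have escape : ∀ y ∉ M, ∃ c ∈ M, c ⊓' y ∈ B := by
    -- otherwise the filter generated by `M` and `y` would still be disjoint from `B`
    intro y hy
    by_contra! hno
    let E := {z | ∃ c ∈ M, A.le (c ⊓' y) z}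
    have hME : M ⊆ E := fun c hc => ⟨c, hc, inf_le_left c y⟩
    have hEB : Disjoint E B :=
      Set.disjoint_left.2 fun z ⟨c, hc, hcz⟩ hz => hno c hc (hBdown z hz _ hcz)
    have hEM : M = E := hmax.eq_of_subset ⟨isFilter_setOf_inf_le hM y, hGM.trans hME, hEB⟩ hME
    exact hy (hEM ▸ ⟨g, hGM hg, inf_le_right g y⟩)
  refine ⟨M, hGM, ⟨hM, fun h => ?_, fun y => ?_⟩, hMB⟩
  · obtain ⟨b, hb⟩ := hBne
    exact Set.disjoint_left.1 hMB (h ▸ Set.mem_univ b) hb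
  · by_contra! hy
    obtain ⟨c, hc, hcB⟩ := escape y hy.1
    obtain ⟨c', hc', hc'B⟩ := escape _ hy.2
    refine Set.disjoint_left.1 hMB (hM.1 _ hc _ hc') ?_
    -- `c ⊓ c'` splits along `y` into two pieces of `B`
    rw [eq_vee_inf_inf_neg (inf_idem_inf c c') y]
    exact hBvee _ (hBdown _ hcB _ (inf_inf_le_inf_left c c' y))
      _ (hBdown _ hc'B _ (inf_inf_le_inf_right c c' _))

theorem exists_isPrimaryFilter_notMem {G : Set D} (hG : A.IsFilter G) (hGne : G.Nonempty)
    {b : D} (hGb : ∀ z ∈ G, ¬A.le z b) : ∃ M, G ⊆ M ∧ A.IsPrimaryFilter M ∧ b ∉ M := by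
  obtain ⟨M, hGM, hM, hMb⟩ := exists_isPrimaryFilter_disjoint hG hGne ⟨b, DBA.le_refl b⟩
    (fun _ hw _ hzw => DBA.le_trans hzw hw) (fun _ ha _ hb => vee_le ha hb)
    (Set.disjoint_left.2 hGb)
  exact ⟨M, hGM, hM, fun hbM => Set.disjoint_left.1 hMb hbM (DBA.le_refl b)⟩

theorem exists_isPrimaryFilter_mem_disjoint {u : D} (hu : u ⊓' u = u)
    (hI : A.IsPrimaryIdeal I) (huI : u ∉ I) : ∃ M, A.IsPrimaryFilter M ∧ u ∈ M ∧ Disjoint M I := by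
  obtain ⟨M, hGM, hM, hMI⟩ := exists_isPrimaryFilter_disjoint (isFilter_setOf_le hu)
    ⟨u, DBA.le_refl u⟩ ⟨_, hI.bot_mem⟩ hI.1.2
    (fun a ha b hb => hI.1.2 _ (hI.1.1 a ha b hb) _ (vee_le_sup a b))
    (Set.disjoint_left.2 fun z huz hz => huI (hI.1.2 z hz u huz))
  exact ⟨M, hM, hGM (DBA.le_refl u), hMI⟩

theorem exists_isPrimaryIdeal_mem_disjoint {v : D} (hv : A.sup v v = v)
    (hF : A.IsPrimaryFilter F) (hvF : v ∉ F) : ∃ M, A.IsPrimaryIdeal M ∧ v ∈ M ∧ Disjoint M F := by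
  simpa only [isPrimaryFilter_dual] using
    exists_isPrimaryFilter_mem_disjoint (A := A.dual) hv (isPrimaryIdeal_dual.2 hF) hvF

theorem inf_eq_of_forall_isPrimaryFilter {a b : D} (ha : a ⊓' a = a)
    (h : ∀ F, A.IsPrimaryFilter F → a ∈ F → b ∈ F) : a ⊓' b = a := by
  by_contra hab
  obtain ⟨M, hGM, hM, hbM⟩ := exists_isPrimaryFilter_notMem (isFilter_setOf_le ha)
    ⟨a, DBA.le_refl a⟩ fun z haz hzb => hab ((DBA.le_trans haz hzb).1.trans ha)
  exact hbM (h M hM (hGM (DBA.le_refl a)))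

theorem eq_of_forall_isPrimaryFilter_mem_iff {a b : D} (ha : a ⊓' a = a) (hb : b ⊓' b = b)
    (h : ∀ F, A.IsPrimaryFilter F → (a ∈ F ↔ b ∈ F)) : a = b := by
  rw [← inf_eq_of_forall_isPrimaryFilter ha fun F hF => (h F hF).1, A.ax2a,
    inf_eq_of_forall_isPrimaryFilter hb fun F hF => (h F hF).2]

theorem eq_of_forall_isPrimaryIdeal_mem_iff {a b : D} (ha : A.sup a a = a)
    (hb : A.sup b b = b) (h : ∀ I, A.IsPrimaryIdeal I → (a ∈ I ↔ b ∈ I)) : a = b :=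
  eq_of_forall_isPrimaryFilter_mem_iff (A := A.dual) ha hb fun I hI =>
    h I (isPrimaryFilter_dual.1 hI)

-- The empty meet is `⊤ ⊓ ⊤` rather than `⊤`, so that `linf l` always lies in `D_⊓`.
def linf (A : DBA D) (l : List D) : D := l.foldr A.inf (A.inf A.top A.top)

theorem linf_idem (l : List D) : A.linf l ⊓' A.linf l = A.linf l := by
  cases l <;> exact inf_idem_inf _ _

theorem linf_append (l l' : List D) : A.linf (l ++ l') = A.linf l ⊓' A.linf l' := by
  induction l with
  | nil =>
    change A.linf l' = A.top ⊓' A.top ⊓' A.linf l'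
    rw [A.ax2a, inf_top_top (linf_idem l')]
  | cons a l ih =>
    change a ⊓' A.linf (l ++ l') = a ⊓' A.linf l ⊓' A.linf l'
    rw [ih, A.ax3a]

theorem IsFilter.linf_mem (hF : A.IsFilter F) (htop : A.top ∈ F) {l : List D}
    (hl : ∀ a ∈ l, a ∈ F) : A.linf l ∈ F := by
  induction l with
  | nil => exact hF.1 _ htop _ htop
  | cons a l ih =>
    exact hF.1 _ (hl a List.mem_cons_self) _ (ih fun b hb => hl b (List.mem_cons_of_mem a hb))

theorem exists_finite_forall_isPrimaryFilter_not_subset {P : Set D}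
    (hP : ∀ F, A.IsPrimaryFilter F → ¬P ⊆ F) :
    ∃ s ⊆ P, s.Finite ∧ ∀ F, A.IsPrimaryFilter F → ¬s ⊆ F := by
  by_contra! hno
  let G := {z | ∃ l : List D, (∀ a ∈ l, a ∈ P) ∧ A.le (A.linf l) z}
  have hG : A.IsFilter G := by
    refine ⟨?_, fun z ⟨l, hl, hlz⟩ z' hzz' => ⟨l, hl, DBA.le_trans hlz hzz'⟩⟩
    rintro z ⟨l, hl, hlz⟩ z' ⟨l', hl', hlz'⟩
    refine ⟨l ++ l', fun a ha => (List.mem_append.1 ha).elim (hl a) (hl' a), ?_⟩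
    rw [linf_append]
    exact le_inf (linf_append l l' ▸ linf_idem _) (DBA.le_trans (inf_le_left _ _) hlz)
      (DBA.le_trans (inf_le_right _ _) hlz')
  obtain ⟨M, hGM, hM, -⟩ := exists_isPrimaryFilter_notMem hG
    ⟨_, [], by simp, DBA.le_refl _⟩ (b := A.bot) fun z ⟨l, hl, hlz⟩ hzb => by
      obtain ⟨F, hF, hlF⟩ := hno {a | a ∈ l} hl (List.finite_toSet l)
      exact hF.bot_notMem (hF.1.2 _ (hF.1.linf_mem hF.top_mem hlF) _ (DBA.le_trans hlz hzb))
  exact hP M hM fun a ha => hGM ⟨[a], by simpa using ha, inf_le_left _ _⟩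

theorem exists_finite_forall_isPrimaryIdeal_not_subset {P : Set D}
    (hP : ∀ I, A.IsPrimaryIdeal I → ¬P ⊆ I) :
    ∃ s ⊆ P, s.Finite ∧ ∀ I, A.IsPrimaryIdeal I → ¬s ⊆ I := by
  simpa only [isPrimaryFilter_dual] using
    exists_finite_forall_isPrimaryFilter_not_subset (A := A.dual) (P := P)
      (by simpa only [isPrimaryFilter_dual] using hP)

end Filters

end DBA

section StoneSpace

open Set TopologicalSpace

variable {X ι : Type*} [t : TopologicalSpace X] {φ : ι → Set X}

theorem isClopen_of_eq_generateFrom (hT : t = generateFrom {U | ∃ i, U = (φ i)ᶜ})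
    (hcompl : ∀ i, ∃ j, φ j = (φ i)ᶜ) (i : ι) : IsClopen (φ i) := by
  have hopen : ∀ j, IsOpen (φ j)ᶜ := fun j => by
    rw [hT]
    exact isOpen_generateFrom_of_mem ⟨j, rfl⟩
  obtain ⟨j, hj⟩ := hcompl i
  exact ⟨isOpen_compl_iff.1 (hopen i), by simpa [hj] using hopen j⟩

theorem compactSpace_of_eq_generateFrom (hT : t = generateFrom {U | ∃ i, U = (φ i)ᶜ})
    (hfip : ∀ P : Set ι, ⋂ i ∈ P, φ i = ∅ → ∃ s ⊆ P, s.Finite ∧ ⋂ i ∈ s, φ i = ∅) :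
    CompactSpace X := by
  refine compactSpace_generateFrom hT fun P hPS hP => ?_
  obtain ⟨s, hsP, hs, hsφ⟩ := hfip {i | (φ i)ᶜ ∈ P} <| eq_empty_of_forall_notMem fun x hx => by
    obtain ⟨_, hU, hxU⟩ := mem_sUnion.1 (hP ▸ mem_univ x)
    obtain ⟨i, rfl⟩ := hPS hU
    exact hxU (mem_iInter₂.1 hx i hU)
  refine ⟨(fun i => (φ i)ᶜ) '' s, image_subset_iff.2 hsP, hs.image _, ?_⟩
  rw [sUnion_image, ← compl_iInter₂, hsφ, compl_empty]

theorem exists_eq_of_isClopen_of_eq_generateFrom [CompactSpace X]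
    (hT : t = generateFrom {U | ∃ i, U = (φ i)ᶜ})
    (hinter : ∀ i j, ∃ k, φ k = φ i ∩ φ j) (hcompl : ∀ i, ∃ j, φ j = (φ i)ᶜ)
    (huniv : ∃ i, φ i = univ) {C : Set X} (hC : IsClopen C) : ∃ i, C = φ i := by
  obtain ⟨u, hu⟩ := huniv
  have hunion : ∀ i j, ∃ k, φ k = φ i ∪ φ j := fun i j => by
    obtain ⟨i', hi'⟩ := hcompl i
    obtain ⟨j', hj'⟩ := hcompl j
    obtain ⟨k, hk⟩ := hinter i' j'
    obtain ⟨l, hl⟩ := hcompl k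
    exact ⟨l, by rw [hl, hk, hi', hj', ← compl_union, compl_compl]⟩
  have hrange : {U | ∃ i, U = (φ i)ᶜ} = range φ := by
    ext U
    refine ⟨fun ⟨i, hi⟩ => ?_, fun ⟨i, hi⟩ => ?_⟩ <;> obtain ⟨j, hj⟩ := hcompl i
    · exact ⟨j, hj.trans hi.symm⟩
    · exact ⟨j, by rw [hj, hi, compl_compl]⟩
  have hbasis : IsTopologicalBasis (range φ) := by
    rw [← insert_eq_of_mem (mem_range.2 ⟨u, hu⟩)]
    refine isTopologicalBasis_of_subbasis_of_inter (hT.trans (congrArg _ hrange)) ?_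
    rintro _ ⟨i, rfl⟩ _ ⟨j, rfl⟩
    exact hinter i j
  obtain ⟨s, hs, rfl⟩ :=
    eq_finite_iUnion_of_isTopologicalBasis_of_isCompact_open φ hbasis C hC.1.isCompact hC.2
  clear hC
  induction s, hs using Set.Finite.induction_on with
  | empty =>
    obtain ⟨e, he⟩ := hcompl u
    exact ⟨e, by rw [he, hu, compl_univ, biUnion_empty]⟩
  | @insert a s _ _ ih =>
    obtain ⟨k, hk⟩ := ih
    obtain ⟨l, hl⟩ := hunion a k
    exact ⟨l, by rw [biUnion_insert, hk, hl]⟩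

end StoneSpace
section Representation

open DBA

variable {D : Type u} {A : DBA D} {x y : D}

theorem Fset_inf (x y : D) : Fset A (A.inf x y) = Fset A x ∩ Fset A y :=
  Set.ext fun F => F.2.inf_mem_iff

theorem Fset_neg (x : D) : Fset A (A.neg x) = (Fset A x)ᶜ :=
  Set.ext fun F => F.2.neg_mem_iff

theorem Fset_top : Fset A A.top = Set.univ :=
  Set.eq_univ_of_forall fun F => F.2.top_mem

theorem Fset_bot : Fset A A.bot = ∅ :=
  Set.eq_empty_of_forall_notMem fun F => F.2.bot_notMem

theorem Iset_sup (x y : D) : Iset A (A.sup x y) = Iset A x ∩ Iset A y :=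
  Set.ext fun I => I.2.sup_mem_iff

theorem Iset_dneg (x : D) : Iset A (A.dneg x) = (Iset A x)ᶜ :=
  Set.ext fun I => I.2.dneg_mem_iff

theorem Iset_bot : Iset A A.bot = Set.univ :=
  Set.eq_univ_of_forall fun I => I.2.bot_mem

theorem Iset_top : Iset A A.top = ∅ :=
  Set.eq_empty_of_forall_notMem fun I => I.2.top_notMem

theorem eq_of_Fset_eq (hx : A.inf x x = x) (hy : A.inf y y = y) (h : Fset A x = Fset A y) :
    x = y :=
  eq_of_forall_isPrimaryFilter_mem_iff hx hy fun F hF => Set.ext_iff.1 h ⟨F, hF⟩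

theorem eq_of_Iset_eq (hx : A.sup x x = x) (hy : A.sup y y = y) (h : Iset A x = Iset A y) :
    x = y :=
  eq_of_forall_isPrimaryIdeal_mem_iff hx hy fun I hI => Set.ext_iff.1 h ⟨I, hI⟩

theorem obbox_Fset_neg {u : D} (hu : A.inf u u = u) :
    obbox (nabla A) (Fset A (A.neg u)) = Iset A u := by
  ext I
  refine ⟨fun hI => ?_, fun huI F hFI => F.2.neg_mem_iff.2 fun huF =>
    Set.eq_empty_iff_forall_notMem.1 hFI u ⟨huF, huI⟩⟩
  by_contra huI
  obtain ⟨M, hM, huM, hMI⟩ := exists_isPrimaryFilter_mem_disjoint hu I.2 huI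
  exact hM.neg_mem_iff.1 (hI ⟨M, hM⟩ (Set.disjoint_iff_inter_eq_empty.1 hMI)) huM

theorem odia_Iset {v : D} (hv : A.sup v v = v) :
    odia (nabla A) (Iset A v) = Fset A (A.neg v) := by
  ext F
  refine ⟨fun ⟨I, hvI, hFI⟩ => F.2.neg_mem_iff.2 fun hvF =>
    Set.eq_empty_iff_forall_notMem.1 hFI v ⟨hvF, hvI⟩, fun hF => ?_⟩
  obtain ⟨M, hM, hvM, hMF⟩ := exists_isPrimaryIdeal_mem_disjoint hv F.2 (F.2.neg_mem_iff.1 hF)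
  exact ⟨⟨M, hM⟩, hvM, Set.disjoint_iff_inter_eq_empty.1 hMF.symm⟩

theorem Fset_isClopen (x : D) : @IsClopen _ (filtTop A) (Fset A x) :=
  @isClopen_of_eq_generateFrom _ _ (filtTop A) _ rfl (fun x => ⟨_, Fset_neg x⟩) x

theorem Iset_isClopen (x : D) : @IsClopen _ (idlTop A) (Iset A x) :=
  @isClopen_of_eq_generateFrom _ _ (idlTop A) _ rfl (fun x => ⟨_, Iset_dneg x⟩) x

theorem compactSpace_filtTop : @CompactSpace _ (filtTop A) := by
  refine @compactSpace_of_eq_generateFrom _ _ (filtTop A) _ rfl fun P hP => ?_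
  obtain ⟨s, hsP, hs, hsF⟩ := exists_finite_forall_isPrimaryFilter_not_subset (A := A) (P := P)
    fun F hF hPF => Set.eq_empty_iff_forall_notMem.1 hP ⟨F, hF⟩ (Set.mem_iInter₂.2 hPF)
  exact ⟨s, hsP, hs, Set.eq_empty_of_forall_notMem fun F hF => hsF F.1 F.2 (Set.mem_iInter₂.1 hF)⟩

theorem compactSpace_idlTop : @CompactSpace _ (idlTop A) := by
  refine @compactSpace_of_eq_generateFrom _ _ (idlTop A) _ rfl fun P hP => ?_
  obtain ⟨s, hsP, hs, hsI⟩ := exists_finite_forall_isPrimaryIdeal_not_subset (A := A) (P := P)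
    fun I hI hPI => Set.eq_empty_iff_forall_notMem.1 hP ⟨I, hI⟩ (Set.mem_iInter₂.2 hPI)
  exact ⟨s, hsP, hs, Set.eq_empty_of_forall_notMem fun I hI => hsI I.1 I.2 (Set.mem_iInter₂.1 hI)⟩

theorem exists_eq_Fset_of_isClopen {C : Set (PrimF A)} (hC : @IsClopen _ (filtTop A) C) :
    ∃ x, C = Fset A x :=
  @exists_eq_of_isClopen_of_eq_generateFrom _ _ (filtTop A) _ compactSpace_filtTop rfl
    (fun x y => ⟨_, Fset_inf x y⟩) (fun x => ⟨_, Fset_neg x⟩) ⟨_, Fset_top⟩ _ hC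

theorem exists_eq_Iset_of_isClopen {C : Set (PrimI A)} (hC : @IsClopen _ (idlTop A) C) :
    ∃ x, C = Iset A x :=
  @exists_eq_of_isClopen_of_eq_generateFrom _ _ (idlTop A) _ compactSpace_idlTop rfl
    (fun x y => ⟨_, Iset_sup x y⟩) (fun x => ⟨_, Iset_dneg x⟩) ⟨_, Iset_bot⟩ _ hC

theorem protoEmb_inf (x y : D) :
    protoEmb A (A.inf x y) = pinf (nabla A) (protoEmb A x) (protoEmb A y) := by
  have h : Fset A (A.neg (A.inf x y)) = Fset A (A.neg x) ∪ Fset A (A.neg y) := by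
    simp only [Fset_neg, Fset_inf, Set.compl_inter]
  refine Prod.ext h ?_
  change Iset A (A.inf x y) = obbox (nabla A) (Fset A (A.neg x) ∪ Fset A (A.neg y))
  rw [← h, obbox_Fset_neg (inf_idem_inf x y)]

theorem protoEmb_sup (x y : D) :
    protoEmb A (A.sup x y) = psup (nabla A) (protoEmb A x) (protoEmb A y) := by
  refine Prod.ext ?_ (Iset_sup x y)
  change Fset A (A.neg (A.sup x y)) = odia (nabla A) (Iset A x ∩ Iset A y)
  rw [← Iset_sup, odia_Iset (sup_idem_sup x y)]

theorem protoEmb_neg (x : D) : protoEmb A (A.neg x) = pneg (nabla A) (protoEmb A x) := by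
  refine Prod.ext (Fset_neg _) ?_
  change Iset A (A.neg x) = obbox (nabla A) (Fset A (A.neg x))ᶜ
  rw [← Fset_neg, obbox_Fset_neg (inf_idem_neg x)]

theorem protoEmb_dneg (x : D) : protoEmb A (A.dneg x) = pdneg (nabla A) (protoEmb A x) := by
  refine Prod.ext ?_ (Iset_dneg x)
  change Fset A (A.neg (A.dneg x)) = odia (nabla A) (Iset A x)ᶜ
  rw [← Iset_dneg, odia_Iset (sup_idem_dneg x)]

theorem protoEmb_top : protoEmb A A.top = ptop :=
  Prod.ext (by rw [protoEmb, A.ax11a, Fset_bot]; rfl) Iset_top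

theorem protoEmb_bot : protoEmb A A.bot = pbot :=
  Prod.ext (by rw [protoEmb, A.ax10a, Fset_inf, Fset_top, Set.inter_self]; rfl) Iset_bot

namespace DBA.Pure

variable (hA : A.Pure)
include hA

theorem eq_of_inf_self_eq_of_sup_self_eq (h₁ : A.inf x x = A.inf y y)
    (h₂ : A.sup x x = A.sup y y) : x = y := by
  -- axiom 12 identifies an element of `D_⊓` with one of `D_⊔` having the same halves
  have key : ∀ {a b : D}, A.inf a a = A.inf b b → A.sup a a = A.sup b b →
      A.inf a a = a → A.sup b b = b → a = b := fun hinf hsup ha hb =>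
    calc _ = A.inf (A.sup _ _) (A.sup _ _) := by rw [hb, ← hinf, ha]
      _ = A.sup (A.inf _ _) (A.inf _ _) := (A.ax12 _).symm
      _ = _ := by rw [← hinf, ha, hsup, hb]
  rcases hA x with hx | hx <;> rcases hA y with hy | hy
  · rw [← hx, ← hy, h₁]
  · exact key h₁ h₂ hx hy
  · exact (key h₁.symm h₂.symm hy hx).symm
  · rw [← hx, ← hy, h₂]

theorem protoEmb_isClopenSemi (x : D) :
    @IsClopenSemi _ _ (filtTop A) (idlTop A) (nabla A) (protoEmb A x) := by
  refine ⟨?_, Fset_isClopen _, Iset_isClopen _⟩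
  rcases hA x with hx | hx
  · exact Or.inl (obbox_Fset_neg hx)
  · exact Or.inr (odia_Iset hx)

theorem protoEmb_injective : Function.Injective (protoEmb A) := fun x y h => by
  have hF : Fset A x = Fset A y := compl_injective <| by
    simpa only [protoEmb, Fset_neg] using congrArg Prod.fst h
  have hI : Iset A x = Iset A y := congrArg Prod.snd h
  refine hA.eq_of_inf_self_eq_of_sup_self_eq ?_ ?_
  · exact eq_of_Fset_eq (inf_idem_inf x x) (inf_idem_inf y y) (by rw [Fset_inf, Fset_inf, hF])
  · exact eq_of_Iset_eq (sup_idem_sup x x) (sup_idem_sup y y)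
      (by rw [Iset_sup, Iset_sup, hI])

end DBA.Pure

theorem exists_protoEmb_eq {p : Set (PrimF A) × Set (PrimI A)}
    (hp : @IsClopenSemi _ _ (filtTop A) (idlTop A) (nabla A) p) : ∃ x, protoEmb A x = p := by
  obtain ⟨hsemi, hp₁, hp₂⟩ := hp
  obtain ⟨a, ha⟩ := exists_eq_Fset_of_isClopen hp₁
  obtain ⟨b, hb⟩ := exists_eq_Iset_of_isClopen hp₂
  rcases hsemi with hs | hs
  · have h₁ : Fset A (A.neg (A.neg a)) = p.1 := by rw [neg_neg, Fset_inf, Set.inter_self, ha]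
    refine ⟨A.neg a, Prod.ext h₁ ?_⟩
    rw [← hs, ← h₁]
    exact (obbox_Fset_neg (inf_idem_neg a)).symm
  · have h₂ : Iset A (A.sup b b) = p.2 := by rw [Iset_sup, Set.inter_self, hb]
    refine ⟨A.sup b b, Prod.ext ?_ h₂⟩
    rw [← hs, ← h₂]
    exact (odia_Iset (sup_idem_sup b b)).symm

theorem DBA.Pure.semiRep (hA : A.Pure) : semiRep A :=
  ⟨protoEmb_inf, protoEmb_sup, protoEmb_neg, protoEmb_dneg, protoEmb_top, protoEmb_bot,
    fun x _ => hA.protoEmb_isClopenSemi x, hA.protoEmb_injective.injOn,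
    fun _ hp => (exists_protoEmb_eq hp).imp fun _ hx => ⟨Set.mem_univ _, hx⟩⟩

end Representation

/-- Representation theorem for pure dBas: for a pure dBa D, the map
h(x) := (F_{¬x}, I_x) is a dBa isomorphism from D onto the dBa of clopen object
oriented semiconcepts of K^T_pr(D); in particular every Boolean algebra (viewed as a
dBa with ⌟ := ¬) is isomorphic to the algebra of clopen object oriented semiconcepts
of K^T_pr(B). -/
theorem stmt18 :
    (∀ (D : Type u) (A : DBA D), A.Pure → semiRep A) ∧
    (∀ (D : Type u) [BooleanAlgebra D] (A : DBA D),
      (∀ x y : D, A.inf x y = x ⊓ y) → (∀ x y : D, A.sup x y = x ⊔ y) →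
      (∀ x : D, A.neg x = xᶜ) → (∀ x : D, A.dneg x = xᶜ) →
      A.top = ⊤ → A.bot = ⊥ → semiRep A) :=
  ⟨fun _ _ hA => hA.semiRep, fun _ _ _ hinf _ _ _ _ _ =>
    DBA.Pure.semiRep fun x => Or.inl ((hinf x x).trans (inf_idem x))⟩
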